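/- arXiv:2604.14890 — 4 statements merged into one kernel-verified Lean document; each statement's English description precedes it below -/
import Mathlib

section
/- Let m be a positive integer and b_1, ..., b_m integers. The equation r_1*b_1 + ... + r_m*b_m = 0 has a solution in positive integers r_1, ..., r_m if and only if either min{b_1,...,b_m} < 0 < max{b_1,...,b_m}, or all b_i are equal to 0. -/
/-- Lemma (existence of positive integer solutions): for `m ≥ 1` and integers
`b : Fin m → ℤ`, the equation `∑ i, r i * b i = 0` has a solution in positive
integers iff either some `b i` is negative and some is positive, or all `b i = 0`. -/
theorem stmt0 (m : ℕ) (hm : 1 ≤ m) (b : Fin m → ℤ) :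
    (∃ r : Fin m → ℤ, (∀ i, 0 < r i) ∧ ∑ i, r i * b i = 0) ↔
      ((∃ i, b i < 0) ∧ (∃ i, 0 < b i)) ∨ (∀ i, b i = 0) := by
  constructor
  · rintro ⟨r, hr, hsum⟩
    by_cases h0 : ∀ i, b i = 0
    · exact Or.inr h0
    push_neg at h0
    obtain ⟨j, hj⟩ := h0
    left
    constructor
    · by_contra hneg
      push_neg at hneg
      have h : 0 < ∑ i, r i * b i := Finset.sum_pos'
        (fun i _ => mul_nonneg (hr i).le (hneg i))
        ⟨j, Finset.mem_univ j, mul_pos (hr j) (lt_of_le_of_ne (hneg j) (Ne.symm hj))⟩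
      omega
    · by_contra hpos
      push_neg at hpos
      have h : 0 < ∑ i, r i * (-b i) := Finset.sum_pos'
        (fun i _ => mul_nonneg (hr i).le (neg_nonneg.mpr (hpos i)))
        ⟨j, Finset.mem_univ j, mul_pos (hr j) (neg_pos.mpr (lt_of_le_of_ne (hpos j) hj))⟩
      simp only [mul_neg, Finset.sum_neg_distrib, hsum, neg_zero] at h
      omega
  · rintro (⟨⟨i0, hi0⟩, ⟨j0, hj0⟩⟩ | h0)
    · set P := ∑ i, max (b i) 0 with hP
      set N := ∑ i, max (-b i) 0 with hN
      have hPpos : 0 < P := Finset.sum_pos'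
        (fun i _ => le_max_right _ _) ⟨j0, Finset.mem_univ _, lt_max_of_lt_left hj0⟩
      have hNpos : 0 < N := Finset.sum_pos'
        (fun i _ => le_max_right _ _)
        ⟨i0, Finset.mem_univ _, lt_max_of_lt_left (neg_pos.mpr hi0)⟩
      refine ⟨fun i => if 0 < b i then N else if b i < 0 then P else 1, ?_, ?_⟩
      · intro i; dsimp only
        split_ifs
        · exact hNpos
        · exact hPpos
        · exact one_pos
      · have key : ∀ i, (if 0 < b i then N else if b i < 0 then P else 1) * b i
            = N * max (b i) 0 - P * max (-b i) 0 := by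
          intro i
          rcases lt_trichotomy (b i) 0 with h | h | h
          · rw [if_neg (not_lt.mpr h.le), if_pos h,
              max_eq_right h.le, max_eq_left (neg_nonneg.mpr h.le)]
            ring
          · simp [h]
          · rw [if_pos h, max_eq_left h.le, max_eq_right (neg_nonpos.mpr h.le)]
            ring
        calc ∑ i, (if 0 < b i then N else if b i < 0 then P else 1) * b i
            = ∑ i, (N * max (b i) 0 - P * max (-b i) 0) :=
              Finset.sum_congr rfl (fun i _ => key i)
          _ = N * P - P * N := by
              rw [Finset.sum_sub_distrib, ← Finset.mul_sum, ← Finset.mul_sum]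
          _ = 0 := by ring
    · exact ⟨fun _ => 1, fun _ => one_pos, by simp [h0]⟩
end

section
/- For each n ≥ 1, the number of lattice paths of length n starting at (0,0), with each step (1,1) or (1,-1), that stay in the closed half-plane y ≥ 0, equals the central binomial coefficient C(n, ⌊n/2⌋). -/
open Finset

/-- binomial sum `∑_{k=⌊(n-h)/2⌋}^{⌊(n+h)/2⌋} C(n,k)` -/
def bsum (n h : ℕ) : ℕ := ∑ k ∈ Finset.Icc ((n - h) / 2) ((n + h) / 2), n.choose k

lemma split_left {a m : ℕ} (h : a ≤ m) (g : ℕ → ℕ) :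
    ∑ k ∈ Finset.Icc a m, g k = g a + ∑ k ∈ Finset.Icc (a + 1) m, g k := by
  have : Finset.Icc a m = insert a (Finset.Icc (a + 1) m) := by
    ext x; simp; omega
  rw [this, Finset.sum_insert (by simp)]

lemma shift_sum (a b : ℕ) (g : ℕ → ℕ) :
    ∑ k ∈ Finset.Icc (a + 1) (b + 1), g k = ∑ k ∈ Finset.Icc a b, g (k + 1) := by
  have h : Finset.Icc (a + 1) (b + 1) = Finset.map (addLeftEmbedding 1) (Finset.Icc a b) := by
    rw [Finset.map_add_left_Icc]; congr 1 <;> omega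
  rw [h, Finset.sum_map]
  exact Finset.sum_congr rfl fun k _ => by rw [addLeftEmbedding_apply, Nat.add_comm]

lemma pascal1 (n a b : ℕ) (hab : a ≤ b) :
    ∑ k ∈ Finset.Icc (a + 1) (b + 1), (n + 1).choose k
      = ∑ k ∈ Finset.Icc (a + 1) (b + 1), n.choose k + ∑ k ∈ Finset.Icc a b, n.choose k := by
  rw [shift_sum, shift_sum]
  simp_rw [Nat.choose_succ_succ']
  rw [Finset.sum_add_distrib]
  ring

lemma pascal0 (n b : ℕ) :
    ∑ k ∈ Finset.Icc 0 (b + 1), (n + 1).choose k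
      = ∑ k ∈ Finset.Icc 0 (b + 1), n.choose k + ∑ k ∈ Finset.Icc 0 b, n.choose k := by
  rw [split_left (a := 0) (m := b + 1) (by omega) (fun k => (n+1).choose k),
    pascal1 n 0 b (by omega),
    split_left (a := 0) (m := b + 1) (by omega) (fun k => n.choose k)]
  simp [Nat.choose_zero_right]; ring

lemma bsum_zero (h : ℕ) : bsum 0 h = 1 := by
  unfold bsum
  rw [Nat.zero_sub, Nat.zero_add, split_left (by omega)]
  simp
  intro i hi h2
  rw [Nat.choose_eq_zero_of_lt (by omega)]

lemma bsum_rec_zero (n : ℕ) : bsum (n + 1) 0 = bsum n 1 := by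
  rcases n with _ | m
  · simp [bsum]
  · unfold bsum
    have h1 : (m + 1 + 1 - 0) / 2 = (m + 1 + 1 + 0) / 2 := by omega
    have h2 : (m + 2) / 2 = (m + 1 - 1) / 2 + 1 := by omega
    have h3 : (m + 1 + 1) / 2 = (m + 1 - 1)/2 + 1 := by omega
    rw [h1, Finset.Icc_self, Finset.sum_singleton]
    have h4 : (m + 1 + 1 + 0) / 2 = (m + 1 + 1)/2 := by omega
    rw [h4, h3, split_left (by omega), Finset.Icc_self, Finset.sum_singleton,
      Nat.choose_succ_succ']

lemma bsum_rec (n h : ℕ) : bsum (n + 1) (h + 1) = bsum n (h + 2) + bsum n h := by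
  unfold bsum
  have e1 : n + 1 - (h + 1) = n - h := by omega
  have e2 : (n + 1 + (h + 1)) / 2 = (n + h) / 2 + 1 := by omega
  have e3 : (n + (h + 2)) / 2 = (n + h) / 2 + 1 := by omega
  rw [e1, e2, e3]
  set b := (n + h) / 2 with hb
  rcases Nat.eq_zero_or_pos ((n - h) / 2) with h0 | h0
  · have e4 : (n - (h + 2)) / 2 = 0 := by omega
    rw [h0, e4, pascal0]
  · obtain ⟨a, ha⟩ : ∃ a, (n - h) / 2 = a + 1 := ⟨(n - h)/2 - 1, by omega⟩
    have e4 : (n - (h + 2)) / 2 = a := by omega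
    have hab : a + 1 ≤ b := by
      have : (n - h) / 2 ≤ (n + h) / 2 := Nat.div_le_div_right (by omega)
      omega
    rw [ha, e4, pascal1 n a b (by omega)]
    rw [split_left (a := a) (m := b + 1) (by omega), split_left (a := a) (m := b) (by omega)]
    ring

lemma bsum_self (n : ℕ) : bsum n 0 = n.choose (n / 2) := by
  unfold bsum
  have : (n - 0) / 2 = (n + 0) / 2 := by omega
  rw [this, Finset.Icc_self, Finset.sum_singleton]
  norm_num

noncomputable def BF (n : ℕ) (a : ℤ) : ℕ := if 0 ≤ a then bsum n a.toNat else 0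

lemma BF_rec (n : ℕ) (a : ℤ) (ha : 0 ≤ a) : BF (n + 1) a = BF n (a + 1) + BF n (a - 1) := by
  rcases eq_or_lt_of_le ha with h0 | h0
  · simp only [BF, ← h0]
    norm_num
    exact bsum_rec_zero n
  · obtain ⟨h, hh⟩ : ∃ h : ℕ, a = (h : ℤ) + 1 := ⟨a.toNat - 1, by omega⟩
    subst hh
    simp only [BF, if_pos (by omega : (0:ℤ) ≤ (h:ℤ) + 1), if_pos (by omega : (0:ℤ) ≤ (h:ℤ) + 1 + 1),
      if_pos (by omega : (0:ℤ) ≤ (h:ℤ) + 1 - 1)]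
    have e1 : ((h:ℤ) + 1).toNat = h + 1 := by omega
    have e2 : ((h:ℤ) + 1 + 1).toNat = h + 2 := by omega
    have e3 : ((h:ℤ) + 1 - 1).toNat = h := by omega
    rw [e1, e2, e3, bsum_rec]

abbrev S : Finset ℤ := {1, -1}

def psum (n : ℕ) (ε : Fin n → S) (j : ℕ) : ℤ :=
  ∑ i ∈ Finset.univ.filter (fun i : Fin n => (i : ℕ) < j), (ε i : ℤ)

lemma psum_zero (n : ℕ) (ε : Fin n → S) : psum n ε 0 = 0 := by
  simp [psum]

lemma psum_succ (n : ℕ) (ε : Fin (n + 1) → S) (j : ℕ) :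
    psum (n + 1) ε (j + 1) = (ε 0 : ℤ) + psum n (Fin.tail ε) j := by
  unfold psum
  rw [Finset.sum_filter, Finset.sum_filter, Fin.sum_univ_succ]
  congr 1
  · refine Finset.sum_congr rfl fun i _ => ?_
    have : ((i.succ : Fin (n + 1)) : ℕ) < j + 1 ↔ (i : ℕ) < j := by
      simp [Fin.val_succ]
    simp only [this]
    rfl

lemma card_sigma' {ι : Type*} [Fintype ι] (f : ι → Type*) [∀ i, Finite (f i)] :
    Nat.card (Sigma f) = ∑ i, Nat.card (f i) := by
  have : ∀ i, Fintype (f i) := fun i => Fintype.ofFinite _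
  rw [Nat.card_eq_fintype_card, Fintype.card_sigma]
  exact Finset.sum_congr rfl fun i _ => (Nat.card_eq_fintype_card).symm

lemma key (n : ℕ) : ∀ a : ℤ,
    Nat.card {ε : Fin n → S // ∀ j ≤ n, 0 ≤ a + psum n ε j} = BF n a := by
  induction n with
  | zero =>
    intro a
    by_cases ha : 0 ≤ a
    · have e : ∀ ε : Fin 0 → S, (∀ j ≤ 0, 0 ≤ a + psum 0 ε j) := by
        intro ε j hj
        interval_cases j
        rw [psum_zero]; omega
      rw [Nat.card_congr (Equiv.subtypeUnivEquiv e)]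
      simp [BF, if_pos ha, bsum_zero]
    · have e : IsEmpty {ε : Fin 0 → S // ∀ j ≤ 0, 0 ≤ a + psum 0 ε j} := by
        constructor
        rintro ⟨ε, hε⟩
        have := hε 0 le_rfl
        rw [psum_zero] at this
        omega
      rw [Nat.card_of_isEmpty]
      simp [BF, if_neg ha]
  | succ n ih =>
    intro a
    by_cases ha : 0 ≤ a
    · -- build the equiv
      have E : {ε : Fin (n + 1) → S // ∀ j ≤ n + 1, 0 ≤ a + psum (n + 1) ε j} ≃
          Σ s : S, {ε : Fin n → S // ∀ j ≤ n, 0 ≤ (a + (s : ℤ)) + psum n ε j} := by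
        refine ⟨fun ε => ⟨ε.1 0, Fin.tail ε.1, ?_⟩, fun p => ⟨Fin.cons p.1 p.2.1, ?_⟩, ?_, ?_⟩
        · intro j hj
          have := ε.2 (j + 1) (by omega)
          rw [psum_succ] at this
          linarith
        · intro j hj
          match j with
          | 0 => rw [psum_zero]; omega
          | (j' + 1) =>
            rw [psum_succ]
            have := p.2.2 j' (by omega)
            simp only [Fin.cons_zero, Fin.tail_cons]
            linarith
        · rintro ⟨ε, hε⟩
          simp [Fin.cons_self_tail]
        · rintro ⟨s, ε, hε⟩
          simp
          exact HEq.rfl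
      rw [Nat.card_congr E, card_sigma']
      have hv : ∀ s : S, Nat.card {ε : Fin n → S // ∀ j ≤ n, 0 ≤ (a + (s : ℤ)) + psum n ε j}
          = BF n (a + (s : ℤ)) := fun s => ih (a + (s : ℤ))
      rw [Finset.sum_congr rfl (fun s _ => hv s)]
      have : ∑ s : S, BF n (a + (s : ℤ)) = ∑ v ∈ S, BF n (a + v) :=
        Finset.sum_coe_sort S (fun v => BF n (a + v))
      rw [this, BF_rec n a ha]
      have h1 : (1 : ℤ) ∉ ({-1} : Finset ℤ) := by decide
      rw [show S = insert 1 {-1} from rfl, Finset.sum_insert h1, Finset.sum_singleton]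
      have e : a + (-1) = a - 1 := by ring
      rw [e]
    · have e : IsEmpty {ε : Fin (n + 1) → S // ∀ j ≤ n + 1, 0 ≤ a + psum (n + 1) ε j} := by
        constructor
        rintro ⟨ε, hε⟩
        have := hε 0 (by omega)
        rw [psum_zero] at this
        omega
      rw [Nat.card_of_isEmpty]
      simp [BF, if_neg ha]

/-- The number of lattice paths of length `n` with steps `±1` starting at height `0`
and staying in the half-plane `y ≥ 0` equals the central binomial coefficient
`C(n, ⌊n/2⌋)`. A path is a function `ε : Fin n → {1,-1}`, and the height after `j`
steps is `∑_{i < j} ε i`. -/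
theorem stmt6 (n : ℕ) (hn : 1 ≤ n) :
    Nat.card {ε : Fin n → ({1, -1} : Finset ℤ) //
      ∀ j ≤ n, 0 ≤ ∑ i ∈ Finset.univ.filter (fun i : Fin n => (i : ℕ) < j), (ε i : ℤ)} =
    Nat.choose n (n / 2) := by
  have h := key n 0
  simp only [psum, zero_add] at h
  rw [h]
  simp [BF, bsum_self]
end

section
/- Let a_n be the number of pairs (ε, k) where ε ∈ {±1}^n and k ∈ ℤ such that, setting S = {ε_i + ε_{i+1} + ... + ε_n : 1 ≤ i ≤ n+1} (with the empty sum equal to 0), one has min S < 2k < max S. Then a_1 = a_2 = 0 and a_{n+2} = 4*a_n + 4*C(n, ⌊n/2⌋) for all n ≥ 1. -/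
/-- The suffix sum `ε_j + ε_{j+1} + ... + ε_{n-1}` (0-indexed) of a sign vector;
for `j = n` this is the empty sum `0`. -/
def suffixSum (n : ℕ) (ε : Fin n → ({1, -1} : Finset ℤ)) (j : ℕ) : ℤ :=
  ∑ i ∈ Finset.univ.filter (fun i : Fin n => j ≤ (i : ℕ)), (ε i : ℤ)

/-- The number of pairs `(ε, k)` with `ε ∈ {±1}^n` and `k ∈ ℤ` such that,
with `S` the set of suffix sums of `ε` (including the empty sum `0`),
`min S < 2k < max S`. -/
noncomputable def admissibleCount (n : ℕ) : ℕ :=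
  Nat.card {p : (Fin n → ({1, -1} : Finset ℤ)) × ℤ //
    (∃ j ≤ n, suffixSum n p.1 j < 2 * p.2) ∧ (∃ j ≤ n, 2 * p.2 < suffixSum n p.1 j)}

namespace Stmt7Aux

abbrev Sgn : Finset ℤ := {1, -1}

lemma suffixSum_eq (n : ℕ) (ε : Fin n → Sgn) (j : ℕ) :
    suffixSum n ε j = ∑ i : Fin n, if j ≤ (i : ℕ) then (ε i : ℤ) else 0 :=
  Finset.sum_filter _ _

lemma suffixSum_of_ge (n : ℕ) (ε : Fin n → Sgn) {j : ℕ} (hj : n ≤ j) :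
    suffixSum n ε j = 0 := by
  rw [suffixSum_eq]
  apply Finset.sum_eq_zero
  intro i _
  rw [if_neg]
  have := i.isLt
  omega

lemma suffixSum_snoc (n : ℕ) (ε : Fin n → Sgn) (c : Sgn) {j : ℕ} (hj : j ≤ n) :
    suffixSum (n+1) (Fin.snoc ε c) j = suffixSum n ε j + (c : ℤ) := by
  rw [suffixSum_eq, suffixSum_eq, Fin.sum_univ_castSucc]
  simp only [Fin.snoc_castSucc, Fin.snoc_last, Fin.coe_castSucc, Fin.val_last]
  rw [if_pos hj]

def SS (n : ℕ) (ε : Fin n → Sgn) : Finset ℤ := (Finset.range (n+1)).image (suffixSum n ε)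

lemma SS_nonempty (n : ℕ) (ε : Fin n → Sgn) : (SS n ε).Nonempty :=
  Finset.Nonempty.image ⟨0, Finset.mem_range.2 (Nat.succ_pos n)⟩ _

noncomputable def mxS (n : ℕ) (ε : Fin n → Sgn) : ℤ := (SS n ε).max' (SS_nonempty n ε)
noncomputable def mnS (n : ℕ) (ε : Fin n → Sgn) : ℤ := (SS n ε).min' (SS_nonempty n ε)

lemma mem_SS_iff {n : ℕ} {ε : Fin n → Sgn} {x : ℤ} :
    x ∈ SS n ε ↔ ∃ j ≤ n, suffixSum n ε j = x := by
  simp [SS, Finset.mem_image, Finset.mem_range, Nat.lt_succ_iff]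

lemma zero_mem_SS (n : ℕ) (ε : Fin n → Sgn) : (0 : ℤ) ∈ SS n ε :=
  mem_SS_iff.2 ⟨n, le_rfl, suffixSum_of_ge n ε le_rfl⟩

lemma mxS_nonneg (n : ℕ) (ε : Fin n → Sgn) : 0 ≤ mxS n ε :=
  Finset.le_max' _ _ (zero_mem_SS n ε)

lemma mnS_nonpos (n : ℕ) (ε : Fin n → Sgn) : mnS n ε ≤ 0 :=
  Finset.min'_le _ _ (zero_mem_SS n ε)

lemma mxS_snoc (n : ℕ) (ε : Fin n → Sgn) (c : Sgn) :
    mxS (n+1) (Fin.snoc ε c) = max (mxS n ε + (c : ℤ)) 0 := by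
  apply le_antisymm
  · apply Finset.max'_le
    intro x hx
    obtain ⟨j, hj, rfl⟩ := mem_SS_iff.1 hx
    rcases le_or_gt j n with h | h
    · rw [suffixSum_snoc n ε c h]
      have : suffixSum n ε j ≤ mxS n ε := Finset.le_max' _ _ (mem_SS_iff.2 ⟨j, h, rfl⟩)
      have := le_max_left (mxS n ε + (c : ℤ)) 0
      omega
    · rw [suffixSum_of_ge _ _ (by omega)]
      exact le_max_right _ _
  · apply max_le
    · obtain ⟨j, hj, hje⟩ := mem_SS_iff.1 (Finset.max'_mem _ (SS_nonempty n ε))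
      apply Finset.le_max'
      exact mem_SS_iff.2 ⟨j, by omega, by rw [suffixSum_snoc n ε c hj, hje]; rfl⟩
    · exact Finset.le_max' _ _ (zero_mem_SS _ _)

lemma mnS_snoc (n : ℕ) (ε : Fin n → Sgn) (c : Sgn) :
    mnS (n+1) (Fin.snoc ε c) = min (mnS n ε + (c : ℤ)) 0 := by
  apply le_antisymm
  · apply le_min
    · obtain ⟨j, hj, hje⟩ := mem_SS_iff.1 (Finset.min'_mem _ (SS_nonempty n ε))
      apply Finset.min'_le
      exact mem_SS_iff.2 ⟨j, by omega, by rw [suffixSum_snoc n ε c hj, hje]; rfl⟩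
    · exact Finset.min'_le _ _ (zero_mem_SS _ _)
  · apply Finset.le_min'
    intro x hx
    obtain ⟨j, hj, rfl⟩ := mem_SS_iff.1 hx
    rcases le_or_gt j n with h | h
    · rw [suffixSum_snoc n ε c h]
      have : mnS n ε ≤ suffixSum n ε j := Finset.min'_le _ _ (mem_SS_iff.2 ⟨j, h, rfl⟩)
      have := min_le_left (mnS n ε + (c : ℤ)) 0
      omega
    · rw [suffixSum_of_ge _ _ (by omega)]
      exact min_le_right _ _

def numK (a b : ℤ) : ℕ := ((b-1)/2 - a/2).toNat

noncomputable instance fintypeK (a b : ℤ) : Fintype {k : ℤ // a < 2*k ∧ 2*k < b} :=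
  Fintype.ofFinset (Finset.Ioc (a/2) ((b-1)/2)) (fun k => by simp only [Finset.mem_Ioc]; change _ ↔ a < 2 * k ∧ 2 * k < b; omega)

lemma card_k (a b : ℤ) : Nat.card {k : ℤ // a < 2*k ∧ 2*k < b} = numK a b := by
  have e : {k : ℤ // a < 2*k ∧ 2*k < b} ≃ {k : ℤ // k ∈ Finset.Ioc (a/2) ((b-1)/2)} :=
    Equiv.subtypeEquivRight (fun k => by simp only [Finset.mem_Ioc]; omega)
  rw [Nat.card_congr e, Nat.card_eq_finsetCard, Int.card_Ioc, numK]

lemma cond_iff (n : ℕ) (ε : Fin n → Sgn) (k : ℤ) :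
    ((∃ j ≤ n, suffixSum n ε j < 2 * k) ∧ (∃ j ≤ n, 2 * k < suffixSum n ε j)) ↔
      (mnS n ε < 2*k ∧ 2*k < mxS n ε) := by
  constructor
  · rintro ⟨⟨j, hj, h1⟩, ⟨j', hj', h2⟩⟩
    constructor
    · exact lt_of_le_of_lt (Finset.min'_le _ _ (mem_SS_iff.2 ⟨j, hj, rfl⟩)) h1
    · exact lt_of_lt_of_le h2 (Finset.le_max' _ _ (mem_SS_iff.2 ⟨j', hj', rfl⟩))
  · rintro ⟨h1, h2⟩
    obtain ⟨j, hj, hje⟩ := mem_SS_iff.1 (Finset.min'_mem _ (SS_nonempty n ε))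
    obtain ⟨j', hj', hje'⟩ := mem_SS_iff.1 (Finset.max'_mem _ (SS_nonempty n ε))
    exact ⟨⟨j, hj, by rw [hje]; exact h1⟩, ⟨j', hj', by rw [hje']; exact h2⟩⟩

lemma admissible_eq_sum (n : ℕ) :
    admissibleCount n = ∑ ε : Fin n → Sgn, numK (mnS n ε) (mxS n ε) := by
  rw [admissibleCount]
  have e : {p : (Fin n → Sgn) × ℤ //
      (∃ j ≤ n, suffixSum n p.1 j < 2 * p.2) ∧ (∃ j ≤ n, 2 * p.2 < suffixSum n p.1 j)} ≃
      (Σ ε : Fin n → Sgn, {k : ℤ // mnS n ε < 2*k ∧ 2*k < mxS n ε}) :=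
    (Equiv.subtypeEquivRight (fun p : (Fin n → Sgn) × ℤ => cond_iff n p.1 p.2)).trans
      (Equiv.subtypeProdEquivSigmaSubtype (fun (ε : Fin n → Sgn) (k : ℤ) => mnS n ε < 2*k ∧ 2*k < mxS n ε))
  rw [Nat.card_congr e, Nat.card_eq_fintype_card, Fintype.card_sigma]
  exact Finset.sum_congr rfl fun ε _ => by
    rw [← card_k (mnS n ε) (mxS n ε), Nat.card_eq_fintype_card]


lemma sum_snoc {M : Type*} [AddCommMonoid M] (n : ℕ) (F : (Fin (n+1) → Sgn) → M) :
    ∑ ε : Fin (n+1) → Sgn, F ε = ∑ c : Sgn, ∑ ε : Fin n → Sgn, F (Fin.snoc ε c) := by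
  calc ∑ ε : Fin (n+1) → Sgn, F ε
      = ∑ p : Sgn × (Fin n → Sgn), F (Fin.snoc p.2 p.1) :=
        (Fintype.sum_equiv (Fin.snocEquiv (fun _ => Sgn)) _ _ (fun p => rfl)).symm
    _ = ∑ c : Sgn, ∑ ε : Fin n → Sgn, F (Fin.snoc ε c) := Fintype.sum_prod_type _

def pone : Sgn := ⟨1, by decide⟩
def mone : Sgn := ⟨-1, by decide⟩

lemma sum_sgn {M : Type*} [AddCommMonoid M] (f : Sgn → M) :
    ∑ c : Sgn, f c = f pone + f mone := by
  have h : (Finset.univ : Finset Sgn) = {pone, mone} := by decide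
  rw [h, Finset.sum_insert (by decide), Finset.sum_singleton]

lemma four_case (a b : ℤ) (ha : a ≤ 0) (hb : 0 ≤ b) (hab : a ≤ -1 ∨ 1 ≤ b) :
    (numK (min (min (a + 1) 0 + 1) 0) (max (max (b + 1) 0 + 1) 0) +
     numK (min (min (a + -1) 0 + 1) 0) (max (max (b + -1) 0 + 1) 0)) +
    (numK (min (min (a + 1) 0 + -1) 0) (max (max (b + 1) 0 + -1) 0) +
     numK (min (min (a + -1) 0 + -1) 0) (max (max (b + -1) 0 + -1) 0))
    = 4 * numK a b + (2 * (if a = 0 then 1 else 0) + 2 * (if b = 0 then 1 else 0)) := by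
  simp only [numK]
  split_ifs <;> omega


noncomputable def Bcnt (n : ℕ) (m : ℤ) : ℕ :=
  ∑ ε : Fin n → Sgn, (if mxS n ε = m then 1 else 0)

lemma mxS_zero (ε : Fin 0 → Sgn) : mxS 0 ε = 0 := by
  apply le_antisymm _ (mxS_nonneg 0 ε)
  apply Finset.max'_le
  intro x hx
  obtain ⟨j, hj, rfl⟩ := mem_SS_iff.1 hx
  rw [suffixSum_of_ge 0 ε (by omega)]

lemma Bcnt_base (m : ℤ) : Bcnt 0 m = if m = 0 then 1 else 0 := by
  rw [Bcnt]
  simp only [mxS_zero]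
  rw [Finset.sum_const, Finset.card_univ]
  have : Fintype.card (Fin 0 → Sgn) = 1 := by simp
  rw [this, one_smul]
  simp [eq_comm]

lemma Bcnt_succ_pos (n : ℕ) (m : ℤ) (hm : 1 ≤ m) :
    Bcnt (n+1) m = Bcnt n (m-1) + Bcnt n (m+1) := by
  rw [Bcnt, sum_snoc, sum_sgn]
  simp only [mxS_snoc]
  rw [← Finset.sum_add_distrib, Bcnt, Bcnt, ← Finset.sum_add_distrib]
  apply Finset.sum_congr rfl
  intro ε _
  have h0 := mxS_nonneg n ε
  have hp : ((pone : Sgn) : ℤ) = 1 := rfl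
  have hm1 : ((mone : Sgn) : ℤ) = -1 := rfl
  rw [hp, hm1]
  split_ifs <;> omega

lemma Bcnt_succ_zero (n : ℕ) :
    Bcnt (n+1) 0 = Bcnt n 0 + Bcnt n 1 := by
  rw [Bcnt, sum_snoc, sum_sgn]
  simp only [mxS_snoc]
  rw [← Finset.sum_add_distrib, Bcnt, Bcnt, ← Finset.sum_add_distrib]
  apply Finset.sum_congr rfl
  intro ε _
  have h0 := mxS_nonneg n ε
  have hp : ((pone : Sgn) : ℤ) = 1 := rfl
  have hm1 : ((mone : Sgn) : ℤ) = -1 := rfl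
  rw [hp, hm1]
  split_ifs <;> omega

lemma Bcnt_eq (n : ℕ) : ∀ m : ℤ, 0 ≤ m → Bcnt n m = n.choose ((n + m.toNat + 1)/2) := by
  induction n with
  | zero =>
    intro m hm
    rw [Bcnt_base]
    by_cases h : m = 0
    · subst h; simp
    · rw [if_neg h]
      obtain ⟨k, hk⟩ : ∃ k, (0 + m.toNat + 1)/2 = k + 1 := ⟨(0 + m.toNat + 1)/2 - 1, by omega⟩
      rw [hk, Nat.choose_zero_succ]
  | succ n ih =>
    intro m hm
    rcases eq_or_lt_of_le hm with h | h
    · -- m = 0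
      rw [← h, Bcnt_succ_zero, ih 0 le_rfl, ih 1 (by omega)]
      have ht0 : ((0:ℤ)).toNat = 0 := rfl
      have ht1 : ((1:ℤ)).toNat = 1 := rfl
      rw [ht0, ht1]
      rcases Nat.even_or_odd n with ⟨p, hp⟩ | ⟨p, hp⟩
      · have e1 : (n + 0 + 1)/2 = p := by omega
        have e2 : (n + 1 + 1)/2 = p + 1 := by omega
        rw [e1, e2]
        exact (Nat.choose_succ_succ' n p).symm
      · have e1 : (n + 0 + 1)/2 = p + 1 := by omega
        have e2 : (n + 1 + 1)/2 = p + 1 := by omega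
        rw [e1, e2]
        have hps := Nat.choose_symm (show p + 1 ≤ n by omega)
        have hnp : n - (p + 1) = p := by omega
        rw [hnp] at hps
        have hpas := Nat.choose_succ_succ' n p
        omega
    · -- m ≥ 1
      have hm1 : (1:ℤ) ≤ m := h
      rw [Bcnt_succ_pos n m hm1, ih (m-1) (by omega), ih (m+1) (by omega)]
      have e1 : (n + (m-1).toNat + 1)/2 = (n + m.toNat)/2 := by omega
      have e2 : (n + (m+1).toNat + 1)/2 = (n + m.toNat)/2 + 1 := by omega
      have e3 : (n + 1 + m.toNat + 1)/2 = (n + m.toNat)/2 + 1 := by omega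
      rw [e1, e2, e3]
      exact (Nat.choose_succ_succ' n ((n + m.toNat)/2)).symm


def negSgn : Sgn ≃ Sgn where
  toFun c := ⟨-c.1, by
    have h := c.2
    simp only [Finset.mem_insert, Finset.mem_singleton] at h ⊢
    omega⟩
  invFun c := ⟨-c.1, by
    have h := c.2
    simp only [Finset.mem_insert, Finset.mem_singleton] at h ⊢
    omega⟩
  left_inv c := Subtype.ext (neg_neg _)
  right_inv c := Subtype.ext (neg_neg _)

lemma suffixSum_neg (n : ℕ) (ε : Fin n → Sgn) (j : ℕ) :
    suffixSum n (fun i => negSgn (ε i)) j = - suffixSum n ε j := by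
  rw [suffixSum, suffixSum, ← Finset.sum_neg_distrib]
  rfl

lemma mxS_neg (n : ℕ) (ε : Fin n → Sgn) :
    mxS n (fun i => negSgn (ε i)) = - mnS n ε := by
  apply le_antisymm
  · apply Finset.max'_le
    intro x hx
    obtain ⟨j, hj, rfl⟩ := mem_SS_iff.1 hx
    rw [suffixSum_neg]
    exact neg_le_neg (Finset.min'_le _ _ (mem_SS_iff.2 ⟨j, hj, rfl⟩))
  · obtain ⟨j, hj, hje⟩ := mem_SS_iff.1 (Finset.min'_mem _ (SS_nonempty n ε))
    apply Finset.le_max'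
    exact mem_SS_iff.2 ⟨j, hj, by rw [suffixSum_neg, hje]; rfl⟩

lemma mnS_count (n : ℕ) :
    ∑ ε : Fin n → Sgn, (if mnS n ε = 0 then (1:ℕ) else 0) = Bcnt n 0 := by
  rw [Bcnt]
  apply Fintype.sum_equiv (Equiv.arrowCongr (Equiv.refl (Fin n)) negSgn)
  intro ε
  have he : (Equiv.arrowCongr (Equiv.refl (Fin n)) negSgn) ε = fun i => negSgn (ε i) := rfl
  rw [he, mxS_neg]
  simp [neg_eq_zero]

lemma suffixSum_last (n : ℕ) (ε : Fin (n+1) → Sgn) :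
    suffixSum (n+1) ε n = (ε (Fin.last n) : ℤ) := by
  rw [suffixSum_eq, Fin.sum_univ_castSucc]
  rw [Finset.sum_eq_zero, Fin.val_last, if_pos le_rfl, zero_add]
  intro i _
  rw [if_neg]
  have := i.isLt
  simp only [Fin.coe_castSucc]
  omega

lemma key_or (n : ℕ) (ε : Fin (n+1) → Sgn) : mnS (n+1) ε ≤ -1 ∨ 1 ≤ mxS (n+1) ε := by
  have hmem : suffixSum (n+1) ε n ∈ SS (n+1) ε := mem_SS_iff.2 ⟨n, by omega, rfl⟩
  rw [suffixSum_last] at hmem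
  have hv := (ε (Fin.last n)).2
  simp only [Finset.mem_insert, Finset.mem_singleton] at hv
  rcases hv with h | h
  · right
    have h2 := Finset.le_max' _ _ hmem
    rw [mxS]
    omega
  · left
    have h2 := Finset.min'_le _ _ hmem
    rw [mnS]
    omega

lemma main_rec (n : ℕ) :
    admissibleCount (n+1+2) = 4 * admissibleCount (n+1) + 4 * Bcnt (n+1) 0 := by
  rw [admissible_eq_sum, admissible_eq_sum]
  rw [show n+1+2 = n+2+1 from rfl]
  rw [sum_snoc (n+2)]
  have hinner : ∀ c : Sgn, ∑ ε : Fin (n+2) → Sgn,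
      numK (mnS (n+2+1) (Fin.snoc ε c)) (mxS (n+2+1) (Fin.snoc ε c))
      = ∑ c' : Sgn, ∑ ε : Fin (n+1) → Sgn,
        numK (mnS (n+2+1) (Fin.snoc (Fin.snoc ε c') c)) (mxS (n+2+1) (Fin.snoc (Fin.snoc ε c') c)) :=
    fun c => sum_snoc (n+1) _
  rw [Finset.sum_congr rfl fun c _ => hinner c]
  simp only [mnS_snoc, mxS_snoc]
  rw [sum_sgn, sum_sgn, sum_sgn]
  have hp : ((pone : Sgn) : ℤ) = 1 := rfl
  have hm1 : ((mone : Sgn) : ℤ) = -1 := rfl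
  simp only [hp, hm1]
  rw [← Finset.sum_add_distrib, ← Finset.sum_add_distrib, ← Finset.sum_add_distrib]
  have step : ∀ ε : Fin (n+1) → Sgn,
      (numK (min (min (mnS (n+1) ε + 1) 0 + 1) 0) (max (max (mxS (n+1) ε + 1) 0 + 1) 0) +
       numK (min (min (mnS (n+1) ε + -1) 0 + 1) 0) (max (max (mxS (n+1) ε + -1) 0 + 1) 0)) +
      (numK (min (min (mnS (n+1) ε + 1) 0 + -1) 0) (max (max (mxS (n+1) ε + 1) 0 + -1) 0) +
       numK (min (min (mnS (n+1) ε + -1) 0 + -1) 0) (max (max (mxS (n+1) ε + -1) 0 + -1) 0))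
      = 4 * numK (mnS (n+1) ε) (mxS (n+1) ε) +
        (2 * (if mnS (n+1) ε = 0 then 1 else 0) + 2 * (if mxS (n+1) ε = 0 then 1 else 0)) :=
    fun ε => four_case _ _ (mnS_nonpos _ _) (mxS_nonneg _ _) (key_or n ε)
  rw [Finset.sum_congr rfl fun ε _ => step ε]
  rw [Finset.sum_add_distrib, Finset.sum_add_distrib, ← Finset.mul_sum, ← Finset.mul_sum,
    ← Finset.mul_sum, mnS_count]
  have hB : ∑ ε : Fin (n+1) → Sgn, (if mxS (n+1) ε = 0 then (1:ℕ) else 0) = Bcnt (n+1) 0 := rfl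
  rw [hB]
  ring


lemma Bcnt_zero (n : ℕ) : Bcnt n 0 = n.choose (n/2) := by
  rw [Bcnt_eq n 0 le_rfl]
  have h1 : (n + (0:ℤ).toNat + 1)/2 = n - n/2 := by
    simp only [Int.toNat_zero]
    omega
  rw [h1, Nat.choose_symm (Nat.div_le_self n 2)]

end Stmt7Aux

/-- The count `a_n` of admissible pairs satisfies `a₁ = a₂ = 0` and the recursion
`a_{n+2} = 4 a_n + 4 C(n, ⌊n/2⌋)` for `n ≥ 1`. -/
theorem stmt7 :
    admissibleCount 1 = 0 ∧ admissibleCount 2 = 0 ∧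
    ∀ n, 1 ≤ n →
      admissibleCount (n + 2) = 4 * admissibleCount n + 4 * Nat.choose n (n / 2) := by
  refine ⟨?_, ?_, ?_⟩
  · rw [Stmt7Aux.admissible_eq_sum]
    decide
  · rw [Stmt7Aux.admissible_eq_sum]
    decide
  · intro n hn
    obtain ⟨l, rfl⟩ : ∃ l, n = l + 1 := ⟨n - 1, by omega⟩
    rw [Stmt7Aux.main_rec l, Stmt7Aux.Bcnt_zero]
end

section
/- Let δ_n ⊂ ℝ^{n+1} be the standard n-simplex (convex hull of the standard basis vectors). Let n_+, n_- be positive integers and n_0 ≥ 0 with n_+ + n_- + n_0 = n+1, and let Λ be the hyperplane {z : z_1 + ... + z_{n_+} - z_{n_++1} - ... - z_{n_++n_-} = 0}. Then δ_n ∩ Λ is affinely equivalent to the n_0-fold cone C^{n_0}(δ_{n_+-1} × δ_{n_--1}) over the product of simplices δ_{n_+-1} × δ_{n_--1}. -/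
noncomputable section

/-- The ambient space `ℝ^{n_+} × ℝ^{n_-} × ℝ^{n_0}` in which the iterated cone over
the product of simplices lives. -/
abbrev ConeSpace (np nm n0 : ℕ) := (Fin np → ℝ) × (Fin nm → ℝ) × (Fin n0 → ℝ)

/-- The cone over a set `P` with apex `v`: all convex combinations `(1-t) q + t v`
with `q ∈ P` and `t ∈ [0,1]`. -/
def coneOp {V : Type*} [AddCommGroup V] [Module ℝ V] (P : Set V) (v : V) : Set V :=
  {x | ∃ q ∈ P, ∃ t : ℝ, 0 ≤ t ∧ t ≤ 1 ∧ x = (1 - t) • q + t • v}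

/-- The `j`-th apex: the `j`-th standard basis vector of the last factor. -/
def apexVec (np nm n0 : ℕ) (j : ℕ) : ConeSpace np nm n0 :=
  (0, 0, fun i => if (i : ℕ) = j then 1 else 0)

/-- The product of simplices `δ_{n_+-1} × δ_{n_--1}`, embedded with last factor `0`. -/
def baseProd (np nm n0 : ℕ) : Set (ConeSpace np nm n0) :=
  {x | x.1 ∈ stdSimplex ℝ (Fin np) ∧ x.2.1 ∈ stdSimplex ℝ (Fin nm) ∧ x.2.2 = 0}

/-- The `j`-fold iterated cone over `δ_{n_+-1} × δ_{n_--1}`, with apexes the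
standard basis vectors of the last factor. -/
def iterCone (np nm n0 : ℕ) : ℕ → Set (ConeSpace np nm n0)
  | 0 => baseProd np nm n0
  | j + 1 => coneOp (iterCone np nm n0 j) (apexVec np nm n0 j)

def Tset (np nm n0 : ℕ) (j : ℕ) : Set (ConeSpace np nm n0) :=
  {p | (∀ a, 0 ≤ p.1 a) ∧ (∀ b, 0 ≤ p.2.1 b) ∧ (∀ i, 0 ≤ p.2.2 i) ∧
       (∀ i : Fin n0, j ≤ (i : ℕ) → p.2.2 i = 0) ∧
       (∑ a, p.1 a = ∑ b, p.2.1 b) ∧ ((∑ a, p.1 a) + ∑ i, p.2.2 i = 1)}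

lemma mem_Tset_iff {np nm n0 j : ℕ} {x : Fin np → ℝ} {y : Fin nm → ℝ} {w : Fin n0 → ℝ} :
    ((x, y, w) : ConeSpace np nm n0) ∈ Tset np nm n0 j ↔
      (∀ a, 0 ≤ x a) ∧ (∀ b, 0 ≤ y b) ∧ (∀ i, 0 ≤ w i) ∧
      (∀ i : Fin n0, j ≤ (i : ℕ) → w i = 0) ∧
      (∑ a, x a = ∑ b, y b) ∧ ((∑ a, x a) + ∑ i, w i = 1) := Iff.rfl

lemma mem_baseProd_iff {np nm n0 : ℕ} {x : Fin np → ℝ} {y : Fin nm → ℝ} {w : Fin n0 → ℝ} :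
    ((x, y, w) : ConeSpace np nm n0) ∈ baseProd np nm n0 ↔
      ((∀ a, 0 ≤ x a) ∧ ∑ a, x a = 1) ∧ ((∀ b, 0 ≤ y b) ∧ ∑ b, y b = 1) ∧ w = 0 := Iff.rfl

lemma apex_sum (n0 j : ℕ) (hj : j < n0) :
    ∑ i : Fin n0, (if (i : ℕ) = j then (1:ℝ) else 0) = 1 := by
  have h1 : ∀ i : Fin n0, (if (i : ℕ) = j then (1:ℝ) else 0)
      = (if i = ⟨j, hj⟩ then (1:ℝ) else 0) := fun i => by
    simp [Fin.ext_iff]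
  simp [h1]

lemma basePt_mem (np nm n0 j : ℕ) (hp : 0 < np) (hm : 0 < nm) :
    ((fun a => if a = (⟨0, hp⟩ : Fin np) then (1:ℝ) else 0),
     (fun b => if b = (⟨0, hm⟩ : Fin nm) then (1:ℝ) else 0),
     (0 : Fin n0 → ℝ)) ∈ Tset np nm n0 j := by
  rw [mem_Tset_iff]
  refine ⟨fun a => ?_, fun b => ?_, fun i => le_refl _, fun i _ => rfl, ?_, ?_⟩
  · split <;> norm_num
  · split <;> norm_num
  · simp
  · simp

lemma iterCone_eq (np nm n0 : ℕ) (hp : 0 < np) (hm : 0 < nm) :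
    ∀ j, j ≤ n0 → iterCone np nm n0 j = Tset np nm n0 j := by
  intro j
  induction j with
  | zero =>
    intro _
    ext ⟨x, y, w⟩
    rw [show iterCone np nm n0 0 = baseProd np nm n0 from rfl, mem_baseProd_iff, mem_Tset_iff]
    constructor
    · rintro ⟨⟨hx, hxs⟩, ⟨hy, hys⟩, hw⟩
      exact ⟨hx, hy, fun i => by simp [hw], fun i _ => by simp [hw], by rw [hxs, hys],
        by simp [hw, hxs]⟩
    · rintro ⟨h1, h2, h3, h4, h5, h6⟩
      have hw : w = 0 := funext fun i => h4 i (Nat.zero_le _)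
      have hws : ∑ i, w i = 0 := by simp [hw]
      have hxs : ∑ a, x a = 1 := by linarith
      exact ⟨⟨h1, hxs⟩, ⟨h2, by rw [← h5, hxs]⟩, hw⟩
  | succ j ih =>
    intro hj1
    have hj : j < n0 := hj1
    have hT : iterCone np nm n0 (j + 1) = coneOp (iterCone np nm n0 j) (apexVec np nm n0 j) := rfl
    rw [hT, ih (le_of_lt hj)]
    ext ⟨x, y, w⟩
    rw [mem_Tset_iff]
    constructor
    · rintro ⟨⟨qx, qy, qw⟩, hq, t, ht0, ht1, heq⟩
      rw [mem_Tset_iff] at hq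
      obtain ⟨q1, q2, q3, q4, q5, q6⟩ := hq
      rw [apexVec, Prod.smul_mk, Prod.smul_mk, Prod.mk_add_mk, Prod.mk_add_mk,
        Prod.mk.injEq, Prod.mk.injEq] at heq
      obtain ⟨hx, hy, hw⟩ := heq
      have hx' : ∀ a, x a = (1 - t) * qx a := fun a => by rw [hx]; simp
      have hy' : ∀ b, y b = (1 - t) * qy b := fun b => by rw [hy]; simp
      have hw' : ∀ i : Fin n0, w i = (1 - t) * qw i + t * (if (i : ℕ) = j then 1 else 0) :=
        fun i => by rw [hw]; simp
      have h1t : (0:ℝ) ≤ 1 - t := by linarith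
      refine ⟨fun a => by rw [hx']; exact mul_nonneg h1t (q1 a),
        fun b => by rw [hy']; exact mul_nonneg h1t (q2 b),
        fun i => ?_, fun i hi => ?_, ?_, ?_⟩
      · rw [hw']
        have := q3 i
        split <;> nlinarith
      · rw [hw', q4 i (by omega), if_neg (by omega)]; ring
      · simp only [hx', hy', ← Finset.mul_sum, q5]
      · have hxs : ∑ a, x a = (1 - t) * ∑ a, qx a := by
          simp only [hx', ← Finset.mul_sum]
        have hws : ∑ i, w i = (1 - t) * (∑ i, qw i) + t := by
          simp only [hw', Finset.sum_add_distrib, ← Finset.mul_sum, apex_sum n0 j hj]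
          ring
        rw [hxs, hws]; nlinarith [q6]
    · rintro ⟨h1, h2, h3, h4, h5, h6⟩
      set t := w ⟨j, hj⟩ with htdef
      have ht0 : 0 ≤ t := h3 _
      have hwsum_le : t ≤ ∑ i, w i :=
        Finset.single_le_sum (fun i _ => h3 i) (Finset.mem_univ _)
      have hxnn : 0 ≤ ∑ a, x a := Finset.sum_nonneg fun a _ => h1 a
      have ht1 : t ≤ 1 := by linarith
      rcases eq_or_lt_of_le ht1 with ht | ht
      · -- t = 1 : the point is the apex
        have hws1 : ∑ i, w i = 1 := le_antisymm (by linarith) (by linarith)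
        have hxs0 : ∑ a, x a = 0 := by linarith
        have hx0 : ∀ a, x a = 0 := by
          intro a
          have := (Finset.sum_eq_zero_iff_of_nonneg (fun i _ => h1 i)).mp hxs0
          exact this a (Finset.mem_univ _)
        have hy0 : ∀ b, y b = 0 := by
          intro b
          have hys0 : ∑ b, y b = 0 := by rw [← h5, hxs0]
          have := (Finset.sum_eq_zero_iff_of_nonneg (fun i _ => h2 i)).mp hys0
          exact this b (Finset.mem_univ _)
        have herase : ∑ i ∈ Finset.univ.erase (⟨j, hj⟩ : Fin n0), w i = 0 := by
          have := Finset.sum_erase_add Finset.univ w (Finset.mem_univ (⟨j, hj⟩ : Fin n0))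
          rw [hws1] at this; linarith
        have hw0 : ∀ i : Fin n0, i ≠ ⟨j, hj⟩ → w i = 0 := by
          intro i hi
          have := (Finset.sum_eq_zero_iff_of_nonneg (fun i _ => h3 i)).mp herase
          exact this i (Finset.mem_erase.mpr ⟨hi, Finset.mem_univ _⟩)
        refine ⟨_, basePt_mem np nm n0 j hp hm, 1, zero_le_one, le_refl _, ?_⟩
        rw [apexVec]
        simp only [sub_self, zero_smul, one_smul, zero_add]
        refine Prod.ext ?_ (Prod.ext ?_ ?_)
        · exact funext fun a => hx0 a
        · exact funext fun b => hy0 b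
        · funext i
          by_cases hij : i = (⟨j, hj⟩ : Fin n0)
          · simp [hij, ← ht, htdef]
          · have hne : (i : ℕ) ≠ j := fun hc => hij (Fin.ext hc)
            simp [hne, hw0 i hij]
      · -- t < 1 : scale back
        have h1t : (0:ℝ) < 1 - t := by linarith
        set u := (1 - t)⁻¹ with hudef
        have hu0 : 0 ≤ u := le_of_lt (inv_pos.mpr h1t)
        have huc : (1 - t) * u = 1 := mul_inv_cancel₀ (ne_of_gt h1t)
        have hwj : ∀ i : Fin n0, (i : ℕ) = j → w i = t := by
          intro i hi; rw [htdef]; congr 1; exact Fin.ext hi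
        have hqmem : ((fun a => u * x a, fun b => u * y b,
            fun i => if (i : ℕ) = j then 0 else u * w i) : ConeSpace np nm n0)
            ∈ Tset np nm n0 j := by
          rw [mem_Tset_iff]
          refine ⟨fun a => mul_nonneg hu0 (h1 a),
            fun b => mul_nonneg hu0 (h2 b),
            fun i => ?_, fun i hi => ?_, ?_, ?_⟩
          · split
            · exact le_refl 0
            · exact mul_nonneg hu0 (h3 i)
          · split
            · rfl
            · rw [h4 i (by omega)]; ring
          · rw [← Finset.mul_sum, ← Finset.mul_sum, h5]
          · have hqw : ∀ i : Fin n0, (if (i : ℕ) = j then (0:ℝ) else u * w i)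
                = u * w i - u * t * (if (i : ℕ) = j then 1 else 0) := by
              intro i; split
              · rename_i hc; rw [hwj i hc]; ring
              · ring
            rw [← Finset.mul_sum]
            simp only [hqw, Finset.sum_sub_distrib, ← Finset.mul_sum, apex_sum n0 j hj]
            linear_combination u * h6 + huc
        refine ⟨_, hqmem, t, ht0, le_of_lt ht, ?_⟩
        simp only [apexVec, Prod.smul_mk, Prod.mk_add_mk]
        refine Prod.ext ?_ (Prod.ext ?_ ?_) <;> funext i <;>
          simp only [Pi.add_apply, Pi.smul_apply, smul_eq_mul, Pi.zero_apply, mul_zero,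
            add_zero]
        · rw [← mul_assoc, huc]; ring
        · rw [← mul_assoc, huc]; ring
        · split
          · rename_i hc; rw [hwj i hc]; ring
          · rw [← mul_assoc, huc]; ring

def splitEquiv (np nm n0 N : ℕ) (h : np + (nm + n0) = N) :
    Fin np ⊕ (Fin nm ⊕ Fin n0) ≃ Fin N :=
  ((Equiv.sumCongr (Equiv.refl (Fin np)) finSumFinEquiv).trans finSumFinEquiv).trans
    (finCongr h)

lemma splitEquiv_inl (np nm n0 N : ℕ) (h : np + (nm + n0) = N) (a : Fin np) :
    ((splitEquiv np nm n0 N h (Sum.inl a)) : ℕ) = a := by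
  simp [splitEquiv]

lemma splitEquiv_inrl (np nm n0 N : ℕ) (h : np + (nm + n0) = N) (b : Fin nm) :
    ((splitEquiv np nm n0 N h (Sum.inr (Sum.inl b))) : ℕ) = np + b := by
  simp [splitEquiv]

lemma splitEquiv_inrr (np nm n0 N : ℕ) (h : np + (nm + n0) = N) (c : Fin n0) :
    ((splitEquiv np nm n0 N h (Sum.inr (Sum.inr c))) : ℕ) = np + (nm + c) := by
  simp [splitEquiv]

def splitMapFun (np nm n0 N : ℕ) (h : np + (nm + n0) = N) (z : Fin N → ℝ) :
    ConeSpace np nm n0 :=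
  (fun a => 2 * z (splitEquiv np nm n0 N h (Sum.inl a)),
   fun b => 2 * z (splitEquiv np nm n0 N h (Sum.inr (Sum.inl b))),
   fun c => z (splitEquiv np nm n0 N h (Sum.inr (Sum.inr c))))

def splitMap (np nm n0 N : ℕ) (h : np + (nm + n0) = N) :
    (Fin N → ℝ) →ᵃ[ℝ] ConeSpace np nm n0 :=
  LinearMap.toAffineMap
    { toFun := splitMapFun np nm n0 N h
      map_add' := fun u v => by
        refine Prod.ext ?_ (Prod.ext ?_ ?_) <;> funext i <;>
          simp [splitMapFun, Pi.add_apply] <;> ring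
      map_smul' := fun c u => by
        refine Prod.ext ?_ (Prod.ext ?_ ?_) <;> funext i <;>
          simp [splitMapFun, Pi.smul_apply, smul_eq_mul] <;> ring }

lemma splitMap_apply (np nm n0 N : ℕ) (h : np + (nm + n0) = N) :
    ⇑(splitMap np nm n0 N h) = splitMapFun np nm n0 N h := rfl


/-- Lemma in convex geometry: the intersection of the standard `n`-simplex with the
hyperplane `z_1 + ... + z_{n_+} - z_{n_++1} - ... - z_{n_++n_-} = 0` is affinely
equivalent (via a bijective affine map) to the `n_0`-fold cone
`C^{n_0}(δ_{n_+-1} × δ_{n_--1})`. -/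
theorem stmt14 (n np nm n0 : ℕ) (hp : 1 ≤ np) (hm : 1 ≤ nm)
    (hsum : np + nm + n0 = n + 1) :
    ∃ f : (Fin (n + 1) → ℝ) →ᵃ[ℝ] ConeSpace np nm n0,
      Set.BijOn f
        (stdSimplex ℝ (Fin (n + 1)) ∩
          {z | (∑ i : Fin (n + 1),
              if (i : ℕ) < np then z i else if (i : ℕ) < np + nm then -z i else 0) = 0})
        (iterCone np nm n0 n0) := by
  have h' : np + (nm + n0) = n + 1 := by omega
  set e := splitEquiv np nm n0 (n + 1) h' with he_def
  have hA : ∀ a : Fin np, ((e (Sum.inl a)) : ℕ) = a := splitEquiv_inl np nm n0 _ h'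
  have hB : ∀ b : Fin nm, ((e (Sum.inr (Sum.inl b))) : ℕ) = np + b :=
    splitEquiv_inrl np nm n0 _ h'
  have hC : ∀ c : Fin n0, ((e (Sum.inr (Sum.inr c))) : ℕ) = np + (nm + c) :=
    splitEquiv_inrr np nm n0 _ h'
  have hsplit : ∀ F : Fin (n + 1) → ℝ, ∑ i, F i =
      (∑ a : Fin np, F (e (Sum.inl a))) +
      ((∑ b : Fin nm, F (e (Sum.inr (Sum.inl b)))) +
       (∑ c : Fin n0, F (e (Sum.inr (Sum.inr c))))) := by
    intro F
    rw [← Equiv.sum_comp e F, Fintype.sum_sum_type, Fintype.sum_sum_type]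
  -- evaluation of the hyperplane integrand on the three blocks
  have hGA : ∀ (z : Fin (n + 1) → ℝ) (a : Fin np),
      (if ((e (Sum.inl a)) : ℕ) < np then z (e (Sum.inl a))
       else if ((e (Sum.inl a)) : ℕ) < np + nm then -z (e (Sum.inl a)) else 0)
        = z (e (Sum.inl a)) := by
    intro z a
    rw [if_pos (by rw [hA a]; exact a.isLt)]
  have hGB : ∀ (z : Fin (n + 1) → ℝ) (b : Fin nm),
      (if ((e (Sum.inr (Sum.inl b))) : ℕ) < np then z (e (Sum.inr (Sum.inl b)))
       else if ((e (Sum.inr (Sum.inl b))) : ℕ) < np + nm then -z (e (Sum.inr (Sum.inl b)))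
       else 0) = -z (e (Sum.inr (Sum.inl b))) := by
    intro z b
    rw [hB b, if_neg (by omega), if_pos (by have := b.isLt; omega)]
  have hGC : ∀ (z : Fin (n + 1) → ℝ) (c : Fin n0),
      (if ((e (Sum.inr (Sum.inr c))) : ℕ) < np then z (e (Sum.inr (Sum.inr c)))
       else if ((e (Sum.inr (Sum.inr c))) : ℕ) < np + nm then -z (e (Sum.inr (Sum.inr c)))
       else 0) = 0 := by
    intro z c
    rw [hC c, if_neg (by omega), if_neg (by omega)]
  have hyper : ∀ z : Fin (n + 1) → ℝ,
      (∑ i : Fin (n + 1),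
        if (i : ℕ) < np then z i else if (i : ℕ) < np + nm then -z i else 0)
      = (∑ a : Fin np, z (e (Sum.inl a))) - ∑ b : Fin nm, z (e (Sum.inr (Sum.inl b))) := by
    intro z
    rw [hsplit (fun i => if (i : ℕ) < np then z i else if (i : ℕ) < np + nm then -z i else 0)]
    rw [Finset.sum_congr rfl (fun a _ => hGA z a),
      Finset.sum_congr rfl (fun b _ => hGB z b),
      Finset.sum_congr rfl (fun c _ => hGC z c)]
    simp only [Finset.sum_neg_distrib, Finset.sum_const_zero, add_zero]
    ring
  rw [iterCone_eq np nm n0 hp hm n0 (le_refl _)]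
  refine ⟨splitMap np nm n0 (n + 1) h', ?_, ?_, ?_⟩
  · -- MapsTo
    rintro z ⟨⟨hz1, hz2⟩, hz3⟩
    rw [Set.mem_setOf_eq] at hz3
    rw [splitMap_apply, splitMapFun, mem_Tset_iff]
    rw [hyper z] at hz3
    rw [hsplit z] at hz2
    refine ⟨fun a => by have := hz1 (e (Sum.inl a)); positivity,
      fun b => by have := hz1 (e (Sum.inr (Sum.inl b))); positivity,
      fun c => hz1 _, fun i hi => absurd i.isLt (by omega), ?_, ?_⟩
    · rw [← Finset.mul_sum, ← Finset.mul_sum]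
      rw [sub_eq_zero] at hz3
      rw [hz3]
    · rw [← Finset.mul_sum]
      linarith
  · -- InjOn
    intro z1 _ z2 _ hfe
    rw [splitMap_apply, splitMapFun, splitMapFun, Prod.mk.injEq, Prod.mk.injEq] at hfe
    obtain ⟨hfx, hfy, hfw⟩ := hfe
    funext i
    rcases hs : e.symm i with a | b | c
    · have hi : i = e (Sum.inl a) := by rw [← hs, Equiv.apply_symm_apply]
      have := congrFun hfx a
      rw [hi]; linarith
    · have hi : i = e (Sum.inr (Sum.inl b)) := by rw [← hs, Equiv.apply_symm_apply]
      have := congrFun hfy b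
      rw [hi]; linarith
    · have hi : i = e (Sum.inr (Sum.inr c)) := by rw [← hs, Equiv.apply_symm_apply]
      have := congrFun hfw c
      rw [hi]; linarith
  · -- SurjOn
    rintro ⟨px, py, pw⟩ hpmem
    rw [mem_Tset_iff] at hpmem
    obtain ⟨p1, p2, p3, p4, p5, p6⟩ := hpmem
    classical
    set z : Fin (n + 1) → ℝ := fun i =>
      match e.symm i with
      | Sum.inl a => px a / 2
      | Sum.inr (Sum.inl b) => py b / 2
      | Sum.inr (Sum.inr c) => pw c with hzdef
    have hzA : ∀ a : Fin np, z (e (Sum.inl a)) = px a / 2 := by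
      intro a; simp only [hzdef, Equiv.symm_apply_apply]
    have hzB : ∀ b : Fin nm, z (e (Sum.inr (Sum.inl b))) = py b / 2 := by
      intro b; simp only [hzdef, Equiv.symm_apply_apply]
    have hzC : ∀ c : Fin n0, z (e (Sum.inr (Sum.inr c))) = pw c := by
      intro c; simp only [hzdef, Equiv.symm_apply_apply]
    refine ⟨z, ⟨⟨?_, ?_⟩, ?_⟩, ?_⟩
    · intro i
      have hinv : i = e (e.symm i) := (e.apply_symm_apply i).symm
      rcases hs : e.symm i with a | b | c
      · rw [hinv, hs, hzA a]; have := p1 a; linarith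
      · rw [hinv, hs, hzB b]; have := p2 b; linarith
      · rw [hinv, hs, hzC c]; exact p3 c
    · rw [hsplit z, Finset.sum_congr rfl (fun a _ => hzA a),
        Finset.sum_congr rfl (fun b _ => hzB b), Finset.sum_congr rfl (fun c _ => hzC c)]
      have hd : ∑ a, px a / 2 = (∑ a, px a) / 2 := by rw [Finset.sum_div]
      have hd' : ∑ b, py b / 2 = (∑ b, py b) / 2 := by rw [Finset.sum_div]
      rw [hd, hd']
      linarith
    · rw [Set.mem_setOf_eq, hyper z, Finset.sum_congr rfl (fun a _ => hzA a),
        Finset.sum_congr rfl (fun b _ => hzB b)]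
      have hd : ∑ a, px a / 2 = (∑ a, px a) / 2 := by rw [Finset.sum_div]
      have hd' : ∑ b, py b / 2 = (∑ b, py b) / 2 := by rw [Finset.sum_div]
      rw [hd, hd']
      linarith
    · rw [splitMap_apply, splitMapFun]
      refine Prod.ext ?_ (Prod.ext ?_ ?_)
      · funext a; dsimp only; rw [hzA a]; ring
      · funext b; dsimp only; rw [hzB b]; ring
      · funext c; dsimp only; rw [hzC c]

end
end
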